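/- For each n ≥ 0 define the truncated map Li*^{≤n} on words by Li*^{≤n}(z_{s_1,u_1} ⋯ z_{s_r,u_r}) = Σ_{n ≥ i_1 ≥ ⋯ ≥ i_r ≥ 0} u_1^{q^{i_1}} ⋯ u_r^{q^{i_r}} / (L_{i_1}^{s_1} ⋯ L_{i_r}^{s_r}) and Li*^{≤n}(1) = 1, extended linearly. Then for all words w, w' and all n ≥ 0, Li*^{≤n}(w ⋆ w') = Li*^{≤n}(w) · Li*^{≤n}(w'), where ⋆ is the stuffle product. -/

import Mathlib

/-- Stuffle product of words (letters are pairs `(s,u)`), valued in the free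
`F`-module on words. -/
noncomputable def stuffleW {F : Type*} [Field F] :
    List (ℕ × F) → List (ℕ × F) → (List (ℕ × F) →₀ F)
  | [], w => Finsupp.single w 1
  | x :: w, [] => Finsupp.single (x :: w) 1
  | x :: w, y :: w' =>
      Finsupp.mapDomain (fun l => x :: l) (stuffleW w (y :: w')) +
      Finsupp.mapDomain (fun l => y :: l) (stuffleW (x :: w) w') -
      Finsupp.mapDomain (fun l => (x.1 + y.1, x.2 * y.2) :: l) (stuffleW w w')
  termination_by w w' => w.length + w'.length

/-- The truncated star polylogarithm `Li*^{≤n}` on words: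
`Li*^{≤n}(z_{s_1,u_1}⋯z_{s_r,u_r}) = Σ_{n ≥ i_1 ≥ ⋯ ≥ i_r ≥ 0} ∏ u_m^{q^{i_m}}/L_{i_m}^{s_m}`,
`Li*^{≤n}(1) = 1`, defined by the equivalent recursion
`Li*^{≤n}(z_{s,u} w) = Σ_{i=0}^{n} (u^{q^i}/L_i^s)·Li*^{≤i}(w)`. -/
noncomputable def liTrunc {F : Type*} [Field F] (q : ℕ) (Lval : ℕ → F) :
    ℕ → List (ℕ × F) → F
  | _, [] => 1
  | n, (s, u) :: w =>
      ∑ i ∈ Finset.range (n + 1), u ^ q ^ i / (Lval i) ^ s * liTrunc q Lval i w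
  termination_by n w => w.length

/-!
Write `Li*^{≤n}(z_{s,u} w) = Σ_{i ≤ n} a_i Li*^{≤i}(w)`. The product of two such sums over the
square `[0,n]²` splits into the triangle `j ≤ i`, the triangle `i ≤ j` and minus the diagonal;
by induction these are the images of the three terms of the stuffle recursion, the diagonal one
because `a_i(s,u) a_i(s',u') = a_i(s+s', uu')`.
-/

section Stuffle

variable {F : Type*} [Field F]

theorem stuffleW_nil_left (w : List (ℕ × F)) : stuffleW [] w = Finsupp.single w 1 := by
  rw [stuffleW]

theorem stuffleW_nil_right (w : List (ℕ × F)) : stuffleW w [] = Finsupp.single w 1 := by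
  cases w <;> rw [stuffleW]

theorem stuffleW_cons_cons (x y : ℕ × F) (w w' : List (ℕ × F)) :
    stuffleW (x :: w) (y :: w') =
      Finsupp.mapDomain (x :: ·) (stuffleW w (y :: w')) +
      Finsupp.mapDomain (y :: ·) (stuffleW (x :: w) w') -
      Finsupp.mapDomain ((x.1 + y.1, x.2 * y.2) :: ·) (stuffleW w w') := by
  rw [stuffleW]

end Stuffle

theorem Finset.sum_range_mul_sum_range_eq_triangles {R : Type*} [CommRing R] (f g : ℕ → R)
    (n : ℕ) :
    (∑ i ∈ range (n + 1), f i) * (∑ j ∈ range (n + 1), g j) =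
      (∑ i ∈ range (n + 1), f i * ∑ j ∈ range (i + 1), g j) +
      (∑ j ∈ range (n + 1), (∑ i ∈ range (j + 1), f i) * g j) -
      ∑ i ∈ range (n + 1), f i * g i := by
  induction n with
  | zero => simp
  | succ n ih =>
    simp only [sum_range_succ] at ih ⊢
    linear_combination ih

section LiTrunc

variable {F : Type*} [Field F] (q : ℕ) (Lval : ℕ → F)

theorem liTrunc_nil (n : ℕ) : liTrunc q Lval n [] = 1 := by
  rw [liTrunc]

theorem liTrunc_cons (n s : ℕ) (u : F) (w : List (ℕ × F)) :
    liTrunc q Lval n ((s, u) :: w) =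
      ∑ i ∈ Finset.range (n + 1), u ^ q ^ i / Lval i ^ s * liTrunc q Lval i w := by
  rw [liTrunc]

theorem linearCombination_liTrunc_comp_cons (n s : ℕ) (u : F) (g : List (ℕ × F) →₀ F) :
    Finsupp.linearCombination F (liTrunc q Lval n ∘ ((s, u) :: ·)) g =
      ∑ i ∈ Finset.range (n + 1),
        u ^ q ^ i / Lval i ^ s * Finsupp.linearCombination F (liTrunc q Lval i) g := by
  simp only [Finsupp.linearCombination_apply, Finsupp.sum, Function.comp_apply, liTrunc_cons,
    Finset.mul_sum, smul_eq_mul]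
  rw [Finset.sum_comm]
  exact Finset.sum_congr rfl fun i _ => Finset.sum_congr rfl fun l _ => by ring

theorem linearCombination_liTrunc_stuffleW (w w' : List (ℕ × F)) (n : ℕ) :
    Finsupp.linearCombination F (liTrunc q Lval n) (stuffleW w w') =
      liTrunc q Lval n w * liTrunc q Lval n w' := by
  induction w, w' using stuffleW.induct generalizing n with
  | case1 w => simp [stuffleW_nil_left, liTrunc_nil]
  | case2 x w => simp [stuffleW_nil_right, liTrunc_nil]
  | case3 x w y w' ih₁ ih₂ ih₃ =>
    obtain ⟨s, u⟩ := x
    obtain ⟨t, v⟩ := y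
    simp only [stuffleW_cons_cons, map_sub, map_add, Finsupp.linearCombination_mapDomain,
      linearCombination_liTrunc_comp_cons, ih₁, ih₂, ih₃]
    rw [liTrunc_cons q Lval n s u, liTrunc_cons q Lval n t v,
      Finset.sum_range_mul_sum_range_eq_triangles]
    simp only [liTrunc_cons]
    congr 1
    · congr 1 <;> exact Finset.sum_congr rfl fun _ _ => by ring
    · exact Finset.sum_congr rfl fun _ _ => by ring

end LiTrunc

theorem stmt_7_general {F : Type*} [Field F] (q : ℕ)
    (Lval : ℕ → F)
    (w w' : List (ℕ × F))
    (n : ℕ) :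
    ((stuffleW w w').sum fun w'' a => a * liTrunc q Lval n w'') =
      liTrunc q Lval n w * liTrunc q Lval n w' :=
  linearCombination_liTrunc_stuffleW q Lval w w' n

/-- truncated multiplicativity — for all words `w, w'` and all `n`,
`Li*^{≤n}(w ⋆ w') = Li*^{≤n}(w) · Li*^{≤n}(w')`, where the left-hand side is the
linear extension of `Li*^{≤n}` applied to the stuffle product. -/
theorem stmt_7 {F : Type*} [Field F] (q : ℕ) (hq : 2 ≤ q)
    (Lval : ℕ → F) (hL0 : ∀ i, Lval i ≠ 0)
    (w w' : List (ℕ × F))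
    (hw : ∀ p ∈ w, 1 ≤ p.1) (hw' : ∀ p ∈ w', 1 ≤ p.1) (n : ℕ) :
    ((stuffleW w w').sum fun w'' a => a * liTrunc q Lval n w'') =
      liTrunc q Lval n w * liTrunc q Lval n w' :=
  stmt_7_general q Lval w w' n
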